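/- arXiv:2202.08574 — 3 statements merged into one kernel-verified Lean document; each statement's English description precedes it below -/
import Mathlib

section
/- Let G be a graph and S ⊆ E(G) a minimal set of edges with α(G/S) < α(G) (minimal with respect to set inclusion among edge sets whose contraction reduces the independence number). Then the spanning subgraph (V(G), S) is a forest. -/
open SimpleGraph

def IsIndepSet' {V : Type*} (G : SimpleGraph V) (s : Finset V) : Prop :=
  ∀ u ∈ s, ∀ v ∈ s, ¬ G.Adj u v

noncomputable def alpha' {V : Type*} (G : SimpleGraph V) : ℕ :=
  sSup {n | ∃ s : Finset V, IsIndepSet' G s ∧ s.card = n}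

def IsVC' {V : Type*} (G : SimpleGraph V) (s : Finset V) : Prop :=
  ∀ ⦃u v : V⦄, G.Adj u v → u ∈ s ∨ v ∈ s

noncomputable def tau' {V : Type*} (G : SimpleGraph V) : ℕ :=
  sInf {n | ∃ s : Finset V, IsVC' G s ∧ s.card = n}

def IsMatching' {V : Type*} (G : SimpleGraph V) (M : Finset (Sym2 V)) : Prop :=
  (↑M : Set (Sym2 V)) ⊆ G.edgeSet ∧
    (↑M : Set (Sym2 V)).Pairwise fun e f => ∀ v : V, v ∈ e → v ∉ f

noncomputable def mu' {V : Type*} (G : SimpleGraph V) : ℕ :=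
  sSup {n | ∃ M : Finset (Sym2 V), IsMatching' G M ∧ M.card = n}

noncomputable def omega' {V : Type*} (G : SimpleGraph V) : ℕ :=
  sSup {n | ∃ s : Finset V, G.IsClique (↑s : Set V) ∧ s.card = n}

def IsBipartite' {V : Type*} (G : SimpleGraph V) : Prop :=
  ∃ A : Set V, ∀ ⦃u v : V⦄, G.Adj u v → (u ∈ A ↔ v ∉ A)

/-- The contraction `G/S`: vertices are the connected components of the spanning
subgraph `(V(G), S)`, two components adjacent iff they contain adjacent vertices of `G`. -/
noncomputable def contract' {V : Type*} (G : SimpleGraph V) (S : Set (Sym2 V)) :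
    SimpleGraph (SimpleGraph.fromEdgeSet S).ConnectedComponent :=
  SimpleGraph.fromRel fun A B => ∃ u v : V,
    (SimpleGraph.fromEdgeSet S).connectedComponentMk u = A ∧
    (SimpleGraph.fromEdgeSet S).connectedComponentMk v = B ∧ G.Adj u v

/-- Add a universal vertex `none` to `G`. -/
def addUniversal {V : Type*} (G : SimpleGraph V) : SimpleGraph (Option V) :=
  SimpleGraph.fromRel fun a b =>
    a = none ∨ ∃ u v : V, a = some u ∧ b = some v ∧ G.Adj u v

/-! If `(V, S)` had a cycle, some edge `e ∈ S` would lie on it and so not be a bridge of `(V, S)`.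
Deleting `e` then leaves the connected components of `(V, S)` unchanged, so `G/(S \ {e})` is
isomorphic to `G/S` and has the same independence number, contradicting the minimality of `S`. -/

namespace SimpleGraph

section Iso

variable {V W : Type*} {G : SimpleGraph V} {H : SimpleGraph W}

theorem IsIndepSet'.map_iso (f : G ≃g H) {s : Finset V} (hs : IsIndepSet' G s) :
    IsIndepSet' H (s.map f.toEquiv.toEmbedding) := by
  simp only [IsIndepSet', Finset.mem_map, Equiv.coe_toEmbedding, forall_exists_index, and_imp]
  rintro _ u hu rfl _ v hv rfl
  exact fun huv ↦ hs u hu v hv (f.map_adj_iff.mp huv)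

theorem Iso.alpha'_eq (f : G ≃g H) : alpha' G = alpha' H := by
  unfold alpha'
  congr 1
  ext n
  constructor
  · rintro ⟨s, hs, rfl⟩
    exact ⟨_, hs.map_iso f, s.card_map _⟩
  · rintro ⟨s, hs, rfl⟩
    exact ⟨_, hs.map_iso f.symm, s.card_map _⟩

end Iso

theorem reachable_deleteEdges_iff_of_not_isBridge {V : Type*} {G : SimpleGraph V} {x y u v : V}
    (h : ¬ G.IsBridge s(x, y)) :
    (G.deleteEdges {s(x, y)}).Reachable u v ↔ G.Reachable u v := by
  rw [isBridge_iff, not_not] at h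
  refine ⟨fun huv ↦ huv.mono (deleteEdges_le _), ?_⟩
  rintro ⟨p⟩
  induction p with
  | nil => rfl
  | @cons a b _ hab _ ih =>
    refine .trans ?_ ih
    by_cases he : s(a, b) = s(x, y)
    · rcases Sym2.eq_iff.mp he with ⟨rfl, rfl⟩ | ⟨rfl, rfl⟩
      exacts [h, h.symm]
    · exact Adj.reachable ((deleteEdges_adj ..).mpr ⟨hab, he⟩)

def contract'IsoOfReachableIff {V : Type*} (G : SimpleGraph V) {S T : Set (Sym2 V)}
    (h : ∀ u v, (fromEdgeSet S).Reachable u v ↔ (fromEdgeSet T).Reachable u v) :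
    contract' G S ≃g contract' G T where
  toEquiv := Quot.congrRight h
  map_rel_iff' {a b} := by
    induction a using ConnectedComponent.ind with | h u
    induction b using ConnectedComponent.ind with | h v
    change (contract' G T).Adj (connectedComponentMk _ u) (connectedComponentMk _ v) ↔ _
    simp only [contract', fromRel_adj, ne_eq, ConnectedComponent.eq, h]

end SimpleGraph

theorem stmt6_general {V : Type*} (G : SimpleGraph V)
    (S : Set (Sym2 V))
    (hcrit : alpha' (contract' G S) < alpha' G)
    (hmin : ∀ S' ⊆ S, S' ≠ S → ¬ alpha' (contract' G S') < alpha' G) :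
    (SimpleGraph.fromEdgeSet S).IsAcyclic := by
  rw [isAcyclic_iff_forall_adj_isBridge]
  by_contra! ⟨x, y, hxy, hbridge⟩
  have hssub : S \ {s(x, y)} ⊂ S := Set.sdiff_singleton_ssubset.2 ((fromEdgeSet_adj S).mp hxy).1
  have hdel : fromEdgeSet (S \ {s(x, y)}) = (fromEdgeSet S).deleteEdges {s(x, y)} :=
    fromEdgeSet_sdiff _ _
  have hsame : ∀ u v,
      (fromEdgeSet (S \ {s(x, y)})).Reachable u v ↔ (fromEdgeSet S).Reachable u v :=
    fun u v ↦ hdel ▸ reachable_deleteEdges_iff_of_not_isBridge hbridge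
  refine hmin _ hssub.subset hssub.ne ?_
  rwa [(contract'IsoOfReachableIff G hsame).alpha'_eq]

theorem stmt6 {V : Type*} [Fintype V] (G : SimpleGraph V)
    (S : Set (Sym2 V)) (hS : S ⊆ G.edgeSet)
    (hcrit : alpha' (contract' G S) < alpha' G)
    (hmin : ∀ S' ⊆ S, S' ≠ S → ¬ alpha' (contract' G S') < alpha' G) :
    (SimpleGraph.fromEdgeSet S).IsAcyclic :=
  stmt6_general G S hcrit hmin
end

section
/- Let G be a connected bipartite graph with |V(G)| ≥ 2d + 2 and α(G) ≥ d + 1, for an integer d ≥ 1. Then there exists a set S ⊆ E(G) with |S| ≤ 2d + 1 such that α(G/S) ≤ α(G) − d. -/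
open SimpleGraph

/-!
For bipartite `G`, König's theorem gives a matching `M` with `|V| ≤ α(G) + |M|`. Grow, from one
vertex along edges of the connected graph `G`, a vertex set `T` that contains both ends of every
edge of `M` it meets, until `2d + 1 ≤ |T| ≤ 2d + 2`, and let `S` be the `|T| - 1` edges of a
spanning tree of `T`. In `G/S` all of `T` becomes one vertex and the others stay single, so `G/S`
has at most `|V| - |T| + 1` vertices, and the edges of `M` outside `T` form a matching of `G/S`,
each of which has an end outside any independent set `I`. The edges of `M` inside `T` number at
most `|T| / 2`, hence
`|I| ≤ |V| - |T| + 1 - (|M| - |T| / 2) ≤ α(G) + 1 - ⌈|T| / 2⌉ = α(G) - d`.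
-/

section

open Finset Function

variable {V : Type*} {G : SimpleGraph V}

lemma card_le_alpha' [Fintype V] {s : Finset V} (hs : IsIndepSet' G s) : #s ≤ alpha' G :=
  le_csSup ⟨Fintype.card V, fun _ ⟨t, _, ht⟩ => ht ▸ t.card_le_univ⟩ ⟨s, hs, rfl⟩

lemma alpha'_le {m : ℕ} (h : ∀ s : Finset V, IsIndepSet' G s → #s ≤ m) : alpha' G ≤ m :=
  csSup_le ⟨0, ∅, by simp [IsIndepSet'], rfl⟩ fun _ ⟨s, hs, hn⟩ => hn ▸ h s hs

namespace IsMatching'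

variable {M M' : Finset (Sym2 V)}

lemma mono (hM : IsMatching' G M) (h : M' ⊆ M) : IsMatching' G M' :=
  ⟨(coe_subset.2 h).trans hM.1, hM.2.mono (coe_subset.2 h)⟩

lemma eq_of_mem_of_mem (hM : IsMatching' G M) {x y z : V} (hy : s(x, y) ∈ M)
    (hz : s(x, z) ∈ M) : y = z := by
  by_contra hyz
  exact hM.2 hy hz (fun h => hyz (Sym2.congr_right.1 h)) x (Sym2.mem_mk_left _ _)
    (Sym2.mem_mk_left _ _)

lemma two_mul_card_le [DecidableEq V] (hM : IsMatching' G M) {T : Finset V}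
    (hT : ∀ e ∈ M, ∀ v ∈ e, v ∈ T) : 2 * #M ≤ #T :=
  calc 2 * #M = ∑ e ∈ M, #e.toFinset := by
        rw [sum_congr rfl fun e he =>
          Sym2.card_toFinset_of_not_isDiag e (G.not_isDiag_of_mem_edgeSet (hM.1 he)),
          sum_const, smul_eq_mul, mul_comm]
    _ = #(M.biUnion Sym2.toFinset) := by
        refine (card_biUnion fun e he f hf hef => disjoint_left.2 fun v hve hvf => ?_).symm
        exact hM.2 he hf hef v (Sym2.mem_toFinset.1 hve) (Sym2.mem_toFinset.1 hvf)
    _ ≤ #T := card_le_card fun v hv => by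
        obtain ⟨e, he, hve⟩ := mem_biUnion.1 hv
        exact hT e he v (Sym2.mem_toFinset.1 hve)

/-- `f(M)` is a matching of `H`, and each of its edges has an end outside `I`. -/
lemma card_add_card_le {W : Type*} [Finite W] {H : SimpleGraph W} {I : Finset W}
    (hI : IsIndepSet' H I) (hM : IsMatching' G M) (f : V → W)
    (hf : ∀ x y, s(x, y) ∈ M → H.Adj (f x) (f y))
    (hinj : ∀ e ∈ M, ∀ x ∈ e, ∀ y, f x = f y → x = y) :
    #I + #M ≤ Nat.card W := by
  classical
  have := Fintype.ofFinite W
  have hfree : ∀ e : Sym2 V, ∃ x ∈ e, e ∈ M → f x ∉ I := by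
    intro e
    induction e using Sym2.ind with
    | _ x y =>
      by_cases hx : f x ∈ I
      · exact ⟨y, Sym2.mem_mk_right x y, fun he hy => hI _ hx _ hy (hf x y he)⟩
      · exact ⟨x, Sym2.mem_mk_left x y, fun _ => hx⟩
  choose g hge hgI using hfree
  have hM_le : #M ≤ #Iᶜ := by
    refine card_le_card_of_injOn (f ∘ g) (fun e he => mem_compl.2 (hgI e he)) ?_
    intro e he e' he' h
    by_contra hne
    have hgg := hinj e he (g e) (hge e) (g e') h
    exact hM.2 he he' hne (g e) (hge e) (hgg ▸ hge e')
  rw [card_compl] at hM_le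
  rw [Nat.card_eq_fintype_card]
  have := I.card_le_univ
  omega

end IsMatching'

/-- Hall's theorem with deficiency `δ`, realised by `δ` extra targets related to everything. -/
theorem Fintype.exists_injective_sum_of_card_le_card_filter_add {α β : Type*} [Fintype β]
    [DecidableEq β] (r : α → β → Prop) [DecidableRel r] (δ : ℕ)
    (h : ∀ A : Finset α, #A ≤ #{b | ∃ a ∈ A, r a b} + δ) :
    ∃ g : α → β ⊕ Fin δ, Injective g ∧ ∀ a, Sum.elim (r a) (fun _ => True) (g a) := by
  classical
  refine (Fintype.all_card_le_filter_rel_iff_exists_injective _).1 fun A => ?_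
  rcases A.eq_empty_or_nonempty with rfl | ⟨a₀, ha₀⟩
  · simp
  calc #A ≤ #{b | ∃ a ∈ A, r a b} + δ := h A
    _ = #(({b | ∃ a ∈ A, r a b} : Finset β).disjSum univ) := by
        rw [card_disjSum, card_univ, Fintype.card_fin]
    _ ≤ _ := card_le_card fun b hb => by
        rcases b with b | i
        · simpa using hb
        · simpa using ⟨a₀, ha₀⟩

lemma exists_isMatching'_of_card_le_card_filter_adj_add [Fintype V] [DecidableEq V]
    [DecidableRel G.Adj]
    {A : Finset V} (hA : ∀ ⦃u v⦄, G.Adj u v → (u ∈ A ↔ v ∉ A)) (δ : ℕ)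
    (h : ∀ X ⊆ A, #X ≤ #{v | ∃ u ∈ X, G.Adj u v} + δ) :
    ∃ M, IsMatching' G M ∧ #A ≤ #M + δ := by
  obtain ⟨g, hg, hgr⟩ := Fintype.exists_injective_sum_of_card_le_card_filter_add
    (fun (a : A) v => G.Adj a v) δ fun B => by
      have := h (B.map (Embedding.subtype _)) fun x hx => by
        obtain ⟨a, -, rfl⟩ := mem_map.1 hx
        exact a.2
      rw [card_map] at this
      convert this using 3
      ext v
      simp
  set p : A → V := fun a => Sum.elim id (fun _ => a.1) (g a)
  set L : Finset A := {a | (g a).isLeft}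
  have hgL : ∀ a ∈ L, g a = Sum.inl (p a) := fun a ha => by
    obtain ⟨v, hv⟩ := Sum.isLeft_iff.1 (mem_filter.1 ha).2
    simp [p, hv]
  have hadj : ∀ a ∈ L, G.Adj a (p a) := fun a ha => by simpa [hgL a ha] using hgr a
  have hpA : ∀ a ∈ L, p a ∉ A := fun a ha => (hA (hadj a ha)).1 a.2
  have hLc : #Lᶜ ≤ δ := by
    have := card_le_card_of_injOn g (s := Lᶜ) (t := (univ : Finset (Fin δ)).map Embedding.inr)
      (fun a ha => by
        obtain ⟨i, hi⟩ := Sum.isRight_iff.1 (Sum.not_isLeft.1 (by simpa [L] using ha))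
        simp [hi]) hg.injOn
    simpa using this
  have hLM : #L = #(L.image fun a => s(a.1, p a)) := by
    refine (card_image_of_injOn fun a ha b hb hab => ?_).symm
    rcases Sym2.eq_iff.1 hab with ⟨hab, -⟩ | ⟨hab, -⟩
    · exact Subtype.ext hab
    · exact absurd (hab ▸ a.2) (hpA b hb)
  refine ⟨L.image fun a => s(a.1, p a), ⟨?_, ?_⟩, ?_⟩
  · intro e he
    obtain ⟨a, ha, rfl⟩ := mem_image.1 (mem_coe.1 he)
    exact hadj a ha
  · intro e he f hf hne x hxe hxf
    obtain ⟨a, ha, rfl⟩ := mem_image.1 (mem_coe.1 he)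
    obtain ⟨b, hb, rfl⟩ := mem_image.1 (mem_coe.1 hf)
    rw [Sym2.mem_iff] at hxe hxf
    rcases hxe with rfl | rfl <;> rcases hxf with hxb | hxb
    · exact hne (by rw [Subtype.ext hxb])
    · exact hpA b hb (hxb ▸ a.2)
    · exact hpA a ha (hxb ▸ b.2)
    · have hab : a = b := hg (by rw [hgL a ha, hgL b hb, hxb])
      exact hne (by rw [hab])
  · have := card_add_card_compl L
    rw [Fintype.card_coe] at this
    omega

theorem IsBipartite'.exists_isMatching'_card_le_alpha'_add [Fintype V] (hG : IsBipartite' G) :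
    ∃ M, IsMatching' G M ∧ Fintype.card V ≤ alpha' G + #M := by
  classical
  obtain ⟨A, hA⟩ := hG
  set A' : Finset V := {v | v ∈ A}
  have hA' : ∀ ⦃u v⦄, G.Adj u v → (u ∈ A' ↔ v ∉ A') := by simpa [A'] using hA
  set N : Finset V → Finset V := fun X => {v | ∃ u ∈ X, G.Adj u v}
  -- by the maximality of `X₀`, Hall's condition holds with deficiency `|X₀| - |N X₀|`
  obtain ⟨X₀, hX₀, hmax⟩ := exists_max_image A'.powerset (fun X => (#X : ℤ) - #(N X))
    ⟨∅, empty_mem_powerset _⟩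
  rw [mem_powerset] at hX₀
  have hN₀ : #(N X₀) ≤ #X₀ := by
    have := hmax ∅ (empty_mem_powerset _)
    simp [N] at this
    omega
  obtain ⟨M, hM, hMA⟩ :=
    exists_isMatching'_of_card_le_card_filter_adj_add hA' (#X₀ - #(N X₀)) fun X hX => by
      have := hmax X (mem_powerset.2 hX)
      dsimp only [N] at this ⊢
      omega
  change #A' ≤ #M + (#X₀ - #(N X₀)) at hMA
  have hI : IsIndepSet' G (X₀ ∪ A'ᶜ \ N X₀) := by
    have hN : ∀ ⦃u v⦄, u ∈ X₀ → G.Adj u v → v ∈ N X₀ := fun u v hu huv =>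
      mem_filter.2 ⟨mem_univ v, u, hu, huv⟩
    intro u hu v hv huv
    simp only [mem_union, mem_sdiff, mem_compl] at hu hv
    rcases hu with hu | ⟨huA, huN⟩ <;> rcases hv with hv | ⟨hvA, hvN⟩
    · exact (hA' huv).1 (hX₀ hu) (hX₀ hv)
    · exact hvN (hN hu huv)
    · exact huN (hN hv huv.symm)
    · exact huA ((hA' huv).2 hvA)
  have hNA : N X₀ ⊆ A'ᶜ := fun v hv => by
    obtain ⟨u, hu, huv⟩ := (mem_filter.1 hv).2
    exact mem_compl.2 ((hA' huv).1 (hX₀ hu))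
  have hIcard : #(X₀ ∪ A'ᶜ \ N X₀) = #X₀ + (#A'ᶜ - #(N X₀)) := by
    rw [card_union_of_disjoint (disjoint_left.2 fun x hx hx' =>
      (mem_compl.1 (mem_sdiff.1 hx').1) (hX₀ hx)), card_sdiff_of_subset hNA]
  have hIα := card_le_alpha' hI
  have hNle := card_le_card hNA
  rw [card_compl] at hIcard hNle
  have := A'.card_le_univ
  exact ⟨M, hM, by omega⟩

def IsMatchClosed (M : Finset (Sym2 V)) (T : Finset V) : Prop :=
  ∀ ⦃x y⦄, s(x, y) ∈ M → x ∈ T → y ∈ T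

lemma IsMatchClosed.forall_notMem {M : Finset (Sym2 V)} {T : Finset V} (hT : IsMatchClosed M T)
    {e : Sym2 V} (he : e ∈ M) (heT : ¬∀ v ∈ e, v ∈ T) : ∀ v ∈ e, v ∉ T := by
  induction e using Sym2.ind with
  | _ x y =>
    intro v hv hvT
    refine heT fun w hw => ?_
    rcases Sym2.mem_iff.1 hv with rfl | rfl <;> rcases Sym2.mem_iff.1 hw with rfl | rfl
    · exact hvT
    · exact hT he hvT
    · exact hT (Sym2.eq_swap ▸ he) hvT
    · exact hvT

structure IsSpanningTreeOn (G : SimpleGraph V) (T : Finset V) (S : Finset (Sym2 V)) : Prop where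
  subset_edgeSet : (S : Set (Sym2 V)) ⊆ G.edgeSet
  mem_of_mem_edge : ∀ e ∈ S, ∀ v ∈ e, v ∈ T
  card_add_one : #S + 1 = #T
  reachable : ∀ u ∈ T, ∀ v ∈ T, (fromEdgeSet (S : Set (Sym2 V))).Reachable u v

namespace IsSpanningTreeOn

variable {T : Finset V} {S M : Finset (Sym2 V)}

lemma singleton (v : V) : IsSpanningTreeOn G {v} ∅ where
  subset_edgeSet := by simp
  mem_of_mem_edge := by simp
  card_add_one := by simp
  reachable := by
    simp only [mem_singleton]
    rintro _ rfl _ rfl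
    rfl

lemma nonempty (hS : IsSpanningTreeOn G T S) : T.Nonempty :=
  card_pos.1 (hS.card_add_one ▸ Nat.succ_pos _)

variable [DecidableEq V]

lemma insert_of_adj (hS : IsSpanningTreeOn G T S) {u v : V} (hu : u ∈ T) (hv : v ∉ T)
    (huv : G.Adj u v) : IsSpanningTreeOn G (insert v T) (insert s(u, v) S) where
  subset_edgeSet := by
    rw [coe_insert]
    exact Set.insert_subset huv hS.subset_edgeSet
  mem_of_mem_edge e he w hw := by
    rcases mem_insert.1 he with rfl | he
    · rcases Sym2.mem_iff.1 hw with rfl | rfl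
      · exact mem_insert_of_mem hu
      · exact mem_insert_self _ _
    · exact mem_insert_of_mem (hS.mem_of_mem_edge e he w hw)
  card_add_one := by
    rw [card_insert_of_notMem hv, card_insert_of_notMem fun h =>
      hv (hS.mem_of_mem_edge _ h v (Sym2.mem_mk_right u v)), hS.card_add_one]
  reachable := by
    have hreach : ∀ x ∈ insert v T,
        (fromEdgeSet ((insert s(u, v) S : Finset (Sym2 V)) : Set (Sym2 V))).Reachable x u := by
      intro x hx
      rcases mem_insert.1 hx with rfl | hx
      · exact Adj.reachable ((fromEdgeSet_adj _).2 ⟨by simp, huv.ne⟩).symm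
      · exact (hS.reachable x hx u hu).mono (fromEdgeSet_mono (by simp))
    exact fun x hx y hy => (hreach x hx).trans (hreach y hy).symm

lemma exists_isMatchClosed_card_le_add_one (hS : IsSpanningTreeOn G T S)
    (hM : IsMatching' G M) {v : V} (hv : v ∈ T)
    (hT : ∀ ⦃x y⦄, s(x, y) ∈ M → x ∈ T → x ≠ v → y ∈ T) :
    ∃ T' S', IsSpanningTreeOn G T' S' ∧ IsMatchClosed M T' ∧ #T ≤ #T' ∧ #T' ≤ #T + 1 := by
  by_cases h : ∃ w ∉ T, s(v, w) ∈ M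
  · obtain ⟨w, hw, hvw⟩ := h
    refine ⟨insert w T, insert s(v, w) S, hS.insert_of_adj hv hw (hM.1 hvw),
      fun x y hxy hx => ?_, card_le_card (subset_insert _ _), card_insert_le _ _⟩
    rcases mem_insert.1 hx with rfl | hx
    · exact mem_insert_of_mem (hM.eq_of_mem_of_mem (Sym2.eq_swap ▸ hvw) hxy ▸ hv)
    · by_cases hxv : x = v
      · subst hxv
        exact hM.eq_of_mem_of_mem hvw hxy ▸ mem_insert_self _ _
      · exact mem_insert_of_mem (hT hxy hx hxv)
  · push Not at h
    refine ⟨T, S, hS, fun x y hxy hx => ?_, le_rfl, by omega⟩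
    by_cases hxv : x = v
    · subst hxv
      by_contra hy
      exact h y hy hxy
    · exact hT hxy hx hxv

lemma exists_isMatchClosed_card_lt [Fintype V] (hS : IsSpanningTreeOn G T S) (hG : G.Connected)
    (hM : IsMatching' G M) (hT : IsMatchClosed M T) (hTV : #T < Fintype.card V) :
    ∃ T' S', IsSpanningTreeOn G T' S' ∧ IsMatchClosed M T' ∧ #T < #T' ∧ #T' ≤ #T + 2 := by
  obtain ⟨t, ht⟩ := hS.nonempty
  obtain ⟨z, -, hz⟩ :=
    exists_mem_notMem_of_card_lt_card (s := T) (t := univ) (by rwa [card_univ])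
  obtain ⟨d, -, hu, hv⟩ := (hG.preconnected t z).some.exists_boundary_dart (T : Set V) ht hz
  obtain ⟨T', S', hS', hT', h₁, h₂⟩ :=
    (hS.insert_of_adj hu hv d.adj).exists_isMatchClosed_card_le_add_one hM (mem_insert_self _ T)
      fun x y hxy hx hxv => mem_insert_of_mem (hT hxy ((mem_insert.1 hx).resolve_left hxv))
  rw [card_insert_of_notMem hv] at h₁ h₂
  exact ⟨T', S', hS', hT', by omega, by omega⟩

end IsSpanningTreeOn

lemma exists_isSpanningTreeOn_isMatchClosed [Fintype V] [DecidableEq V] (hG : G.Connected)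
    {M : Finset (Sym2 V)} (hM : IsMatching' G M) (k : ℕ) (hk : k < Fintype.card V) :
    ∃ T S, IsSpanningTreeOn G T S ∧ IsMatchClosed M T ∧ k + 1 ≤ #T ∧ #T ≤ k + 2 := by
  induction k with
  | zero =>
    obtain ⟨v⟩ := hG.nonempty
    obtain ⟨T, S, hS, hT, h₁, h₂⟩ :=
      (IsSpanningTreeOn.singleton v).exists_isMatchClosed_card_le_add_one hM (mem_singleton_self v)
        fun x y _ hx hxv => absurd (mem_singleton.1 hx) hxv
    rw [card_singleton] at h₁ h₂
    exact ⟨T, S, hS, hT, h₁, h₂⟩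
  | succ k ih =>
    obtain ⟨T, S, hS, hT, h₁, h₂⟩ := ih (by omega)
    by_cases hk' : k + 2 ≤ #T
    · exact ⟨T, S, hS, hT, hk', by omega⟩
    obtain ⟨T', S', hS', hT', h₁', h₂'⟩ :=
      hS.exists_isMatchClosed_card_lt hG hM hT (by omega)
    exact ⟨T', S', hS', hT', by omega, by omega⟩

lemma eq_of_reachable_fromEdgeSet {S : Finset (Sym2 V)} {T : Finset V}
    (hST : ∀ e ∈ S, ∀ v ∈ e, v ∈ T) {x y : V} (hx : x ∉ T)
    (h : (fromEdgeSet (S : Set (Sym2 V))).Reachable x y) : x = y := by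
  obtain ⟨p⟩ := h
  cases p with
  | nil => rfl
  | cons hadj _ => exact absurd (hST _ ((fromEdgeSet_adj _).1 hadj).1 x (Sym2.mem_mk_left _ _)) hx

lemma card_connectedComponent_add_card_le [Fintype V] {H : SimpleGraph V} {T : Finset V}
    (hT : T.Nonempty) (h : ∀ u ∈ T, ∀ v ∈ T, H.Reachable u v) :
    Nat.card H.ConnectedComponent + #T ≤ Fintype.card V + 1 := by
  classical
  obtain ⟨t, ht⟩ := hT
  have hcover : (univ : Finset H.ConnectedComponent) ⊆
      insert (H.connectedComponentMk t) (Tᶜ.image H.connectedComponentMk) := by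
    intro C _
    induction C using ConnectedComponent.ind with
    | h v =>
      by_cases hv : v ∈ T
      · exact mem_insert.2 (Or.inl (ConnectedComponent.eq.2 (h v hv t ht)))
      · exact mem_insert_of_mem (mem_image_of_mem _ (mem_compl.2 hv))
  have := (card_le_card hcover).trans ((card_insert_le _ _).trans
    (Nat.add_le_add_right card_image_le 1))
  rw [card_univ, ← Nat.card_eq_fintype_card, card_compl] at this
  have := T.card_le_univ
  omega

lemma card_add_card_le_card_connectedComponent [Finite V] {S : Finset (Sym2 V)} {T : Finset V}
    (hST : ∀ e ∈ S, ∀ v ∈ e, v ∈ T)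
    {I : Finset (fromEdgeSet (S : Set (Sym2 V))).ConnectedComponent}
    (hI : IsIndepSet' (contract' G S) I) {M : Finset (Sym2 V)} (hM : IsMatching' G M)
    (hMT : ∀ e ∈ M, ∀ v ∈ e, v ∉ T) :
    #I + #M ≤ Nat.card (fromEdgeSet (S : Set (Sym2 V))).ConnectedComponent := by
  have hinj : ∀ e ∈ M, ∀ x ∈ e, ∀ y,
      (fromEdgeSet (S : Set (Sym2 V))).connectedComponentMk x =
        (fromEdgeSet (S : Set (Sym2 V))).connectedComponentMk y → x = y := fun e he x hx y hxy =>
    eq_of_reachable_fromEdgeSet hST (hMT e he x hx) (ConnectedComponent.eq.1 hxy)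
  refine hM.card_add_card_le hI _ (fun x y hxy => ?_) hinj
  have hadj : G.Adj x y := hM.1 hxy
  rw [contract', fromRel_adj]
  exact ⟨fun h => hadj.ne (hinj _ hxy x (Sym2.mem_mk_left x y) y h),
    Or.inl ⟨x, y, rfl, rfl, hadj⟩⟩

end

open Finset in
theorem stmt12_general {V : Type*} [Fintype V] (G : SimpleGraph V) (d : ℕ)
    (hconn : G.Connected) (hbip : IsBipartite' G)
    (hcard : 2 * d + 2 ≤ Fintype.card V) :
    ∃ S : Finset (Sym2 V), (↑S : Set (Sym2 V)) ⊆ G.edgeSet ∧ S.card ≤ 2 * d + 1 ∧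
      alpha' (contract' G (↑S : Set (Sym2 V))) ≤ alpha' G - d := by
  classical
  obtain ⟨M, hM, hMα⟩ := hbip.exists_isMatching'_card_le_alpha'_add
  obtain ⟨T, S, hS, hT, hT₁, hT₂⟩ :=
    exists_isSpanningTreeOn_isMatchClosed hconn hM (2 * d) (by omega)
  refine ⟨S, hS.subset_edgeSet, by have := hS.card_add_one; omega, alpha'_le fun I hI => ?_⟩
  set Min := M.filter fun e => ∀ v ∈ e, v ∈ T
  set Mout := M.filter fun e => ¬∀ v ∈ e, v ∈ T
  have hsplit : #Min + #Mout = #M := card_filter_add_card_filter_not _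
  have hin : 2 * #Min ≤ #T :=
    (hM.mono (filter_subset _ M)).two_mul_card_le fun e he => (mem_filter.1 he).2
  have hout : #I + #Mout ≤ _ := card_add_card_le_card_connectedComponent hS.mem_of_mem_edge hI
    (hM.mono (filter_subset _ M)) fun e he =>
      hT.forall_notMem (mem_filter.1 he).1 (mem_filter.1 he).2
  have hcomp := card_connectedComponent_add_card_le hS.nonempty hS.reachable
  omega

theorem stmt12 {V : Type*} [Fintype V] (G : SimpleGraph V) (d : ℕ) (hd : 1 ≤ d)
    (hconn : G.Connected) (hbip : IsBipartite' G)
    (hcard : 2 * d + 2 ≤ Fintype.card V) (halpha : d + 1 ≤ alpha' G) :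
    ∃ S : Finset (Sym2 V), (↑S : Set (Sym2 V)) ⊆ G.edgeSet ∧ S.card ≤ 2 * d + 1 ∧
      alpha' (contract' G (↑S : Set (Sym2 V))) ≤ alpha' G - d :=
  stmt12_general G d hconn hbip hcard
end

section
/- Let G be a graph, M a maximum matching of G, and T a subtree of G such that for every vertex v of T that is covered by M, the M-partner of v also lies in T and the matching edge belongs to T. Then G − V(T) has a matching of size at least μ(G) − ⌊|V(T)|/2⌋. -/
open SimpleGraph

theorem stmt13 {V : Type*} [Fintype V] (G : SimpleGraph V) (M : Finset (Sym2 V))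
    (hM : IsMatching' G M) (hMmax : M.card = mu' G)
    (T : G.Subgraph) (hconn : T.coe.Connected) (hacyc : T.coe.IsAcyclic)
    (hclose : ∀ v ∈ T.verts, ∀ e ∈ M, v ∈ e → e ∈ T.edgeSet) :
    ∃ M' : Finset (Sym2 V), IsMatching' G M' ∧
      (∀ e ∈ M', ∀ v : V, v ∈ e → v ∉ T.verts) ∧
      mu' G ≤ M'.card + T.verts.ncard / 2 := by
  classical
  set p : Sym2 V → Prop := fun e => ∀ v ∈ e, v ∉ T.verts with hp
  refine ⟨M.filter p, ⟨?_, ?_⟩, ?_, ?_⟩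
  · intro e he
    exact hM.1 (Finset.mem_coe.mpr (Finset.mem_filter.mp (Finset.mem_coe.mp he)).1)
  · exact hM.2.mono (by intro e he; exact Finset.mem_coe.mpr (Finset.mem_filter.mp (Finset.mem_coe.mp he)).1)
  · intro e he v hv
    exact (Finset.mem_filter.mp he).2 v hv
  · set R := M.filter (fun e => ¬ p e) with hR
    have hsplit : (M.filter p).card + R.card = M.card :=
      Finset.card_filter_add_card_filter_not (p := p)
    -- each e ∈ R lies in T
    have hRT : ∀ e ∈ R, ∀ v ∈ e, v ∈ T.verts := by
      intro e he v hv
      obtain ⟨heM, hne⟩ := Finset.mem_filter.mp he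
      simp only [hp] at hne
      push_neg at hne
      obtain ⟨w, hw, hwT⟩ := hne
      have heT : e ∈ T.edgeSet := hclose w hwT e heM hw
      exact SimpleGraph.Subgraph.mem_verts_of_mem_edge heT hv
    -- count: 2 * R.card ≤ T.verts.ncard
    have hcount : 2 * R.card ≤ T.verts.ncard := by
      have hfin : T.verts.ncard = T.verts.toFinset.card := Set.ncard_eq_toFinset_card' _
      rw [hfin]
      set S : Finset V := R.biUnion (fun e => Set.toFinset {x | x ∈ e}) with hS
      have hSsub : S ⊆ T.verts.toFinset := by
        intro v hv
        obtain ⟨e, he, hve⟩ := Finset.mem_biUnion.mp hv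
        rw [Set.mem_toFinset] at hve
        exact Set.mem_toFinset.mpr (hRT e he v hve)
      have hdisj : ∀ e ∈ R, ∀ f ∈ R, e ≠ f →
          Disjoint (Set.toFinset {x | x ∈ e}) (Set.toFinset {x | x ∈ f}) := by
        intro e he f hf hef
        rw [Finset.disjoint_left]
        intro v hv hv'
        rw [Set.mem_toFinset] at hv hv'
        exact hM.2 (Finset.mem_coe.mpr (Finset.mem_filter.mp he).1)
          (Finset.mem_coe.mpr (Finset.mem_filter.mp hf).1) hef v hv hv'
      have hcard : S.card = ∑ e ∈ R, (Set.toFinset {x | x ∈ e}).card :=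
        Finset.card_biUnion hdisj
      have htwo : ∀ e ∈ R, (Set.toFinset {x | x ∈ e}).card = 2 := by
        intro e he
        have heG : e ∈ G.edgeSet := hM.1 (Finset.mem_coe.mpr (Finset.mem_filter.mp he).1)
        induction e with
        | h a b =>
          have hab : a ≠ b := by
            intro h; exact G.not_isDiag_of_mem_edgeSet heG (by simp [h])
          have : {x | x ∈ s(a, b)} = {a, b} := by ext x; simp [Sym2.mem_iff]
          rw [Set.toFinset_congr this, Set.toFinset_insert, Set.toFinset_singleton]
          simp [hab]
      calc 2 * R.card = ∑ e ∈ R, 2 := by rw [Finset.sum_const, smul_eq_mul, mul_comm]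
        _ = S.card := by rw [hcard]; exact (Finset.sum_congr rfl htwo).symm
        _ ≤ T.verts.toFinset.card := Finset.card_le_card hSsub
    have : R.card ≤ T.verts.ncard / 2 := Nat.le_div_iff_mul_le (by norm_num) |>.mpr (by omega)
    omega
end
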